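/- arXiv:0802.1484 — 5 statements merged into one kernel-verified Lean document; each statement's English description precedes it below -/
import Mathlib

section
/- Let V be a normed real vector space and let D ⊆ V be a dense additive subgroup of V. Let H be a finitely generated abelian group and let ψ : H → V be an additive homomorphism. Then for any finite set of elements g_1, …, g_n ∈ H and any ε > 0, there exists an additive homomorphism h : H → V whose range is contained in D such that ‖ψ(g_i) − h(g_i)‖ < ε for every 1 ≤ i ≤ n. -/
/-!
Since `V` is torsion-free, `ψ` factors through `H ⧸ torsion`, a free `ℤ`-module of finite rank.
On a basis `bⱼ` of it, move each `ψ bⱼ` to some `dⱼ ∈ D` within `δ` and extend `ℤ`-linearly; the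
error at `x = ∑ cⱼ bⱼ` is at most `(∑ |cⱼ|) δ`, which is small for the finitely many `gᵢ`.
-/

open Filter Topology Module

theorem LinearMap.torsion_le_ker {R M N : Type*} [CommRing R] [IsDomain R] [AddCommGroup M]
    [Module R M] [AddCommGroup N] [Module R N] [IsTorsionFree R N] (f : M →ₗ[R] N) :
    Submodule.torsion R M ≤ LinearMap.ker f := by
  rintro x ⟨a, hax⟩
  have : (a : R) • f x = 0 := by rw [← map_smul, ← Submonoid.smul_def, hax, map_zero]
  exact (smul_eq_zero.mp this).resolve_left (nonZeroDivisors.coe_ne_zero a)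

section Approximation

variable {V M ι : Type*} [SeminormedAddCommGroup V] [AddCommGroup M] [Fintype ι]

theorem Module.Basis.norm_sub_constr_le (b : Basis ι ℤ M) (f : M →ₗ[ℤ] V) (d : ι → V) {δ : ℝ}
    (hd : ∀ j, ‖f (b j) - d j‖ ≤ δ) (x : M) :
    ‖f x - b.constr ℕ d x‖ ≤ (∑ j, ‖b.repr x j‖) * δ := by
  have hsum : f x - b.constr ℕ d x = ∑ j, b.repr x j • (f (b j) - d j) := by
    have hf : f x = ∑ j, b.repr x j • f (b j) := by
      conv_lhs => rw [← b.sum_repr x]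
      simp only [map_sum, map_zsmul]
    simp [hf, Basis.constr_apply_fintype, smul_sub]
  rw [hsum, Finset.sum_mul]
  refine (norm_sum_le _ _).trans (Finset.sum_le_sum fun j _ => ?_)
  exact (norm_zsmul_le _ _).trans (by gcongr; exact hd j)

theorem Module.Free.exists_linearMap_mem_approx [Module.Free ℤ M] [Module.Finite ℤ M]
    (D : AddSubgroup V) (hD : Dense (D : Set V)) (f : M →ₗ[ℤ] V) {κ : Type*} [Finite κ]
    (x : κ → M) {ε : ℝ} (hε : 0 < ε) :
    ∃ h : M →ₗ[ℤ] V, (∀ y, h y ∈ D) ∧ ∀ i, ‖f (x i) - h (x i)‖ < ε := by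
  let b := Free.chooseBasis ℤ M
  obtain ⟨δ, hδ, hδε⟩ : ∃ δ : ℝ, 0 < δ ∧ ∀ i, (∑ j, ‖b.repr (x i) j‖) * δ < ε := by
    have : ∀ᶠ δ in 𝓝 (0 : ℝ), ∀ i, (∑ j, ‖b.repr (x i) j‖) * δ < ε :=
      eventually_all.2 fun i =>
        (continuous_const.mul continuous_id).tendsto' 0 0 (by simp) |>.eventually (gt_mem_nhds hε)
    have hpos := (this.filter_mono (nhdsWithin_le_nhds (s := Set.Ioi 0))).and self_mem_nhdsWithin
    exact hpos.exists.imp fun δ h => ⟨h.2, h.1⟩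
  choose d hdD hdδ using fun j => hD.exists_dist_lt (f (b j)) hδ
  refine ⟨b.constr ℕ d, fun y => ?_, fun i => ?_⟩
  · rw [Basis.constr_apply_fintype]
    exact D.sum_mem fun j _ => D.zsmul_mem (hdD j) _
  · refine (b.norm_sub_constr_le f d (fun j => ?_) (x i)).trans_lt (hδε i)
    exact (dist_eq_norm (f (b j)) (d j) ▸ hdδ j).le

end Approximation

/-- Lemma `approx`: Let `V` be a normed real vector space, `D ⊆ V` a dense
additive subgroup, `H` a finitely generated abelian group and `ψ : H → V` an additive
homomorphism. Then for any `g₁, …, g_n ∈ H` and `ε > 0` there is an additive homomorphism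
`h : H → V` with range contained in `D` such that `‖ψ (g i) - h (g i)‖ < ε` for all `i`. -/
theorem stmt_1 {V : Type*} [NormedAddCommGroup V] [NormedSpace ℝ V]
    (D : AddSubgroup V) (hD : Dense (D : Set V))
    {H : Type*} [AddCommGroup H] [AddGroup.FG H]
    (ψ : H →+ V) (n : ℕ) (g : Fin n → H) (ε : ℝ) (hε : 0 < ε) :
    ∃ h : H →+ V, (∀ x : H, h x ∈ D) ∧ ∀ i : Fin n, ‖ψ (g i) - h (g i)‖ < ε := by
  have : Module.Finite ℤ H := Module.Finite.iff_addGroup_fg.mpr ‹_›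
  have : IsAddTorsionFree V := .of_isTorsionFree ℝ V
  let T := Submodule.torsion ℤ H
  obtain ⟨h, hhD, hclose⟩ := Module.Free.exists_linearMap_mem_approx D hD
    (T.liftQ ψ.toIntLinearMap ψ.toIntLinearMap.torsion_le_ker) (fun i => T.mkQ (g i)) hε
  exact ⟨(h ∘ₗ T.mkQ).toAddMonoidHom, fun x => hhD _, hclose⟩
end

section
/- Let E and H be abelian groups, let G ⊆ E be a subgroup, and let π : E → H be a surjective group homomorphism with kernel G, so that 0 → G → E → H → 0 is exact. Assume this extension is pure: for every finitely generated subgroup H' ⊆ H there is a homomorphism θ' : H' → E with π ∘ θ' equal to the inclusion of H' into H. Assume moreover that G carries the structure of a partially ordered abelian group with order unit u which is tracially approximately divisible. Let h_1, …, h_{n+1} ∈ H, let H_n be the subgroup of H generated by {h_1, …, h_n} and H_{n+1} the subgroup generated by {h_1, …, h_{n+1}}. Then for any ε > 0 and any homomorphism θ_n : H_n → E with π ∘ θ_n equal to the inclusion of H_n into H, there exists a homomorphism θ_{n+1} : H_{n+1} → E with π ∘ θ_{n+1} equal to the inclusion of H_{n+1} into H, such that for each 1 ≤ i ≤ n the element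 θ_{n+1}(h_i) − θ_n(h_i) lies in G and satisfies |τ(θ_{n+1}(h_i) − θ_n(h_i))| < ε for every state τ of (G, u). -/
/-- A state of a partially ordered abelian group `G` with order unit `u`:
an additive homomorphism `τ : G → ℝ` which is positive and normalized at `u`. -/
def IsPOGroupState {G : Type*} [AddCommGroup G] [PartialOrder G] (u : G)
    (τ : G →+ ℝ) : Prop :=
  (∀ g : G, 0 ≤ g → 0 ≤ τ g) ∧ τ u = 1

/-- `G` (with order unit `u`) is tracially approximately divisible if for every `a ∈ G`,
`ε > 0` and `n ≥ 1` there exists `b ∈ G` with `|τ (a - n • b)| ≤ ε` for every state `τ`. -/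
def TraciallyApproxDivisible {G : Type*} [AddCommGroup G] [PartialOrder G] (u : G) : Prop :=
  ∀ a : G, ∀ ε : ℝ, 0 < ε → ∀ n : ℕ, 1 ≤ n → ∃ b : G,
    ∀ τ : G →+ ℝ, IsPOGroupState u τ → |τ (a - n • b)| ≤ ε

/-! Purity gives some splitting `θ'` of `π` over `H_{n+1}`; on `H_n` it differs from `θ_n` by a
homomorphism `ψ : H_n → G`. Let `k` generate `{m | m • h_{n+1} ∈ H_n}`. For any `β : H_n → G`,
the map `θ' - k • β` on `H_n` together with the lift `θ'(h_{n+1}) - β(k • h_{n+1})` still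
respects the relation `k • h_{n+1} ∈ H_n`, which generates all relations between `H_n` and
`h_{n+1}`, so it extends to `H_{n+1}`. Writing `H_n ≅ ℤ^r × T` with `T` finite, tracial
approximate divisibility gives `β` on a basis of `ℤ^r` making every state of `ψ - k • β` small at
the finitely many `h_i`, while states vanish on the torsion `T`. -/

theorem abs_map_finsupp_le_of_abs_map_single_le {ι : Type*} (ρ : (ι →₀ ℤ) →+ ℝ) {c : ℝ}
    (hc : ∀ l, |ρ (Finsupp.single l 1)| ≤ c) (f : ι →₀ ℤ) :
    |ρ f| ≤ (f.sum fun _ m => |(m : ℝ)|) * c := by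
  have hρ : ρ f = f.sum fun l m => (m : ℝ) * ρ (Finsupp.single l 1) := by
    conv_lhs => rw [← f.sum_single]
    rw [map_finsuppSum]
    refine Finsupp.sum_congr fun l _ => ?_
    rw [← Finsupp.smul_single_one, map_zsmul, zsmul_eq_mul]
  calc |ρ f| ≤ f.sum fun l m => |(m : ℝ)| * |ρ (Finsupp.single l 1)| := by
        rw [hρ, Finsupp.sum, Finsupp.sum]
        simpa only [abs_mul] using
          Finset.abs_sum_le_sum_abs (fun l => (f l : ℝ) * ρ (Finsupp.single l 1)) f.support
    _ ≤ f.sum fun _ m => |(m : ℝ)| * c :=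
        Finset.sum_le_sum fun l _ => mul_le_mul_of_nonneg_left (hc l) (abs_nonneg _)
    _ = (f.sum fun _ m => |(m : ℝ)|) * c := (Finsupp.sum_mul _ _).symm

theorem AddMonoidHom.map_eq_zero_of_isOfFinAddOrder {A : Type*} [AddCommGroup A] (ρ : A →+ ℝ)
    {t : A} (ht : IsOfFinAddOrder t) : ρ t = 0 :=
  IsOfFinAddOrder.eq_zero' (ρ.isOfFinAddOrder ht)

theorem isAddTorsion_directSum_zmod {ι : Type} [Fintype ι] {p : ι → ℕ} (hp : ∀ i, (p i).Prime)
    (e : ι → ℕ) : IsAddTorsion (DirectSum ι fun i => ZMod (p i ^ e i)) := by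
  have : ∀ i, NeZero (p i ^ e i) := fun i => ⟨pow_ne_zero _ (hp i).ne_zero⟩
  have : Finite (DirectSum ι fun i => ZMod (p i ^ e i)) :=
    Finite.of_equiv _ DFinsupp.equivFunOnFintype.symm
  exact fun t => isOfFinAddOrder_of_finite t

theorem AddSubgroup.exists_nat_zsmul_mem_iff_dvd {H : Type*} [AddCommGroup H]
    (K : AddSubgroup H) (h : H) : ∃ k : ℕ, ∀ m : ℤ, m • h ∈ K ↔ (k : ℤ) ∣ m := by
  obtain ⟨a, ha⟩ := Int.subgroup_cyclic (K.comap (zmultiplesHom H h))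
  refine ⟨a.natAbs, fun m => ?_⟩
  rw [Int.natAbs_dvd, ← Int.mem_zmultiples_iff, AddSubgroup.zmultiples_eq_closure, ← ha]
  rfl

namespace TraciallyApproxDivisible

variable {Γ : Type*} [AddCommGroup Γ] [PartialOrder Γ] {u : Γ}

theorem exists_hom_free_prod_abs_sub_nsmul_le (hdiv : TraciallyApproxDivisible u)
    {ι T : Type*} [AddCommGroup T] (hT : IsAddTorsion T) (ψ : (ι →₀ ℤ) × T →+ Γ) {k : ℕ}
    (hk : 1 ≤ k) {δ : ℝ} (hδ : 0 < δ) :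
    ∃ β : (ι →₀ ℤ) × T →+ Γ, ∀ z τ, IsPOGroupState u τ →
      |τ (ψ z - k • β z)| ≤ (z.1.sum fun _ m => |(m : ℝ)|) * δ := by
  choose b hb using fun l => hdiv (ψ (Finsupp.single l 1, 0)) δ hδ k hk
  set β := (Finsupp.liftAddHom fun l => zmultiplesHom Γ (b l)).comp
    (AddMonoidHom.fst (ι →₀ ℤ) T)
  refine ⟨β, fun z τ hτ => ?_⟩
  set ρ : (ι →₀ ℤ) × T →+ ℝ := τ.comp (ψ - k • β)
  have hρT : ρ (0, z.2) = 0 :=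
    (ρ.comp (AddMonoidHom.inr _ _)).map_eq_zero_of_isOfFinAddOrder (hT z.2)
  have hρF : |ρ (z.1, 0)| ≤ (z.1.sum fun _ m => |(m : ℝ)|) * δ := by
    refine abs_map_finsupp_le_of_abs_map_single_le (ρ.comp (AddMonoidHom.inl _ _))
      (fun l => ?_) z.1
    simpa [ρ, β] using hb l τ hτ
  have hz : ρ z = ρ (z.1, 0) + ρ (0, z.2) := by
    rw [← map_add, Prod.mk_add_mk, add_zero, zero_add]
  rw [hρT, add_zero] at hz
  rw [← hz] at hρF
  simpa [ρ] using hρF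

theorem exists_hom_abs_sub_nsmul_lt (hdiv : TraciallyApproxDivisible u) {A : Type*}
    [AddCommGroup A] [AddGroup.FG A] (ψ : A →+ Γ) {k : ℕ} (hk : 1 ≤ k) (s : Finset A)
    {ε : ℝ} (hε : 0 < ε) :
    ∃ β : A →+ Γ, ∀ a ∈ s, ∀ τ, IsPOGroupState u τ → |τ (ψ a - k • β a)| < ε := by
  obtain ⟨r, ι, _, p, hp, e, ⟨Φ⟩⟩ := AddCommGroup.equiv_free_prod_directSum_zmod A
  set norm₁ : A → ℝ := fun a => (Φ a).1.sum fun _ m => |(m : ℝ)|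
  have hnorm₁ : ∀ a, 0 ≤ norm₁ a := fun a => Finset.sum_nonneg fun _ _ => abs_nonneg _
  set D := ∑ a ∈ s, norm₁ a
  have hD : 0 ≤ D := Finset.sum_nonneg fun a _ => hnorm₁ a
  obtain ⟨β, hβ⟩ := hdiv.exists_hom_free_prod_abs_sub_nsmul_le
    (isAddTorsion_directSum_zmod hp e) (ψ.comp Φ.symm.toAddMonoidHom) hk
    (δ := ε / (D + 1)) (by positivity)
  refine ⟨β.comp Φ.toAddMonoidHom, fun a ha τ hτ => ?_⟩
  calc |τ (ψ a - k • β (Φ a))| ≤ norm₁ a * (ε / (D + 1)) := by simpa using hβ (Φ a) τ hτ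
    _ ≤ D * (ε / (D + 1)) := by
        gcongr
        exact Finset.single_le_sum (fun a _ => hnorm₁ a) ha
    _ < ε := by
        rw [mul_div_assoc', div_lt_iff₀ (by positivity)]
        nlinarith

end TraciallyApproxDivisible

section Splitting

variable {E H : Type*} [AddCommGroup E] [AddCommGroup H] (π : E →+ H)

theorem exists_section_sup_zmultiples_extending {K : AddSubgroup H} {h : H} {k : ℕ}
    (hk : ∀ m : ℤ, m • h ∈ K ↔ (k : ℤ) ∣ m) (θ : K →+ E) (hθ : ∀ w, π (θ w) = w)
    (e : E) (he : π e = h) (hθe : ∀ w : K, (w : H) = (k : ℤ) • h → θ w = (k : ℤ) • e) :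
    ∃ θ' : ↥(K ⊔ AddSubgroup.zmultiples h) →+ E, (∀ x, π (θ' x) = x) ∧
      ∀ w : K, θ' (AddSubgroup.inclusion le_sup_left w) = θ w := by
  set σ : K × ℤ →+ ↥(K ⊔ AddSubgroup.zmultiples h) :=
    (K.subtype.coprod (zmultiplesHom H h)).codRestrict _ fun z =>
      AddSubgroup.add_mem_sup z.1.2 (AddSubgroup.zsmul_mem_zmultiples h z.2)
  have hσ_apply : ∀ z, (σ z : H) = z.1 + z.2 • h := fun _ => rfl
  have hσ : Function.Surjective σ := by
    rintro ⟨x, hx⟩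
    obtain ⟨w, hw, _, ⟨m, rfl⟩, rfl⟩ := AddSubgroup.mem_sup.mp hx
    exact ⟨(⟨w, hw⟩, m), rfl⟩
  set Φ : K × ℤ →+ E := θ.coprod (zmultiplesHom E e)
  have hΦ : σ.ker ≤ Φ.ker := by
    rintro ⟨w, m⟩ hwm
    have hwm : (w : H) + m • h = 0 := congrArg Subtype.val hwm
    have hmh : m • h = -(w : H) := eq_neg_of_add_eq_zero_right hwm
    obtain ⟨t, rfl⟩ := (hk m).mp (hmh ▸ K.neg_mem w.2)
    set x₀ : K := ⟨(k : ℤ) • h, (hk k).mpr dvd_rfl⟩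
    have hw : w = -(t • x₀) := by
      ext
      simp [x₀, eq_neg_of_add_eq_zero_left hwm, mul_comm (k : ℤ) t, mul_smul]
    simp [Φ, hw, hθe x₀ rfl, mul_comm (k : ℤ) t, mul_smul]
  set θ' := σ.liftOfSurjective hσ ⟨Φ, hΦ⟩
  have hθ' : ∀ z, θ' (σ z) = Φ z := σ.liftOfRightInverse_comp_apply _ _ ⟨Φ, hΦ⟩
  refine ⟨θ', fun x => ?_, fun w => ?_⟩
  · obtain ⟨⟨w, m⟩, rfl⟩ := hσ x
    rw [hθ']
    simp [Φ, hσ_apply, hθ, he]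
  · have hw : AddSubgroup.inclusion le_sup_left w = σ (w, 0) := by
      ext
      simp [hσ_apply]
    simpa [hw, Φ] using hθ' (w, 0)

theorem TraciallyApproxDivisible.exists_corrected_section {G : AddSubgroup E} [PartialOrder G]
    {u : G} (hdiv : TraciallyApproxDivisible u) (hker : π.ker = G)
    {K : AddSubgroup H} [AddGroup.FG K] {h : H} {k : ℕ} (hkh : (k : ℤ) • h ∈ K)
    (θ₁ θ : K →+ E) (hθ₁ : ∀ w, π (θ₁ w) = w) (hθ : ∀ w, π (θ w) = w) (e₀ : E)
    (he₀ : π e₀ = h) (hθ₁e₀ : ∀ w : K, (w : H) = (k : ℤ) • h → θ₁ w = (k : ℤ) • e₀)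
    (s : Finset K) {ε : ℝ} (hε : 0 < ε) :
    ∃ (θt : K →+ E) (e : E), (∀ w, π (θt w) = w) ∧ π e = h ∧
      (∀ w : K, (w : H) = (k : ℤ) • h → θt w = (k : ℤ) • e) ∧
      ∀ w ∈ s, ∃ g : G, θt w - θ w = g ∧ ∀ τ : G →+ ℝ, IsPOGroupState u τ → |τ g| < ε := by
  rcases Nat.eq_zero_or_pos k with rfl | hk
  · refine ⟨θ, e₀, hθ, he₀, fun w hw => ?_, fun w _ => ⟨0, by simp, fun τ _ => by simpa using hε⟩⟩
    rw [show w = 0 from Subtype.ext (by simpa using hw)]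
    simp
  have hG : ∀ g : G, π g = 0 := fun g => by
    rw [← AddMonoidHom.mem_ker, hker]
    exact g.2
  have hψ : ∀ w, (θ₁ - θ) w ∈ G := fun w => by
    rw [← hker, AddMonoidHom.mem_ker, AddMonoidHom.sub_apply, map_sub, hθ₁, hθ, sub_self]
  set ψ : K →+ G := (θ₁ - θ).codRestrict G hψ
  obtain ⟨β, hβ⟩ := hdiv.exists_hom_abs_sub_nsmul_lt ψ hk s hε
  set x₀ : K := ⟨_, hkh⟩
  refine ⟨θ₁ - k • G.subtype.comp β, e₀ - β x₀, fun w => ?_, ?_, fun w hw => ?_,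
    fun w hw => ⟨ψ w - k • β w, ?_, hβ w hw⟩⟩
  · simp [hθ₁, hG]
  · simp [he₀, hG]
  · rw [show w = x₀ from Subtype.ext hw]
    simp [hθ₁e₀ x₀ rfl, smul_sub, natCast_zsmul]
  · simp [ψ]
    abel

end Splitting

theorem stmt_2_general {E H : Type*} [AddCommGroup E] [AddCommGroup H]
    (G : AddSubgroup E) [PartialOrder ↥G]
    (u : ↥G)
    (hdiv : TraciallyApproxDivisible u)
    (π : E →+ H) (hker : π.ker = G)
    (hpure : ∀ H' : AddSubgroup H, H'.FG →
      ∃ θ' : ↥H' →+ E, ∀ x : ↥H', π (θ' x) = (x : H))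
    (n : ℕ) (h : Fin (n + 1) → H)
    (θn : ↥(AddSubgroup.closure (Set.range fun i : Fin n => h i.castSucc)) →+ E)
    (hθn : ∀ x, π (θn x) = (x : H))
    (ε : ℝ) (hε : 0 < ε) :
    ∃ θn1 : ↥(AddSubgroup.closure (Set.range h)) →+ E,
      (∀ x, π (θn1 x) = (x : H)) ∧
      ∀ i : Fin n, ∃ g : ↥G,
        θn1 ⟨h i.castSucc, AddSubgroup.subset_closure ⟨i.castSucc, rfl⟩⟩ -
            θn ⟨h i.castSucc, AddSubgroup.subset_closure ⟨i, rfl⟩⟩ = (g : E) ∧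
        ∀ τ : ↥G →+ ℝ, IsPOGroupState u τ → |τ g| < ε := by
  classical
  let K := AddSubgroup.closure (Set.range fun i : Fin n => h i.castSucc)
  let L := AddSubgroup.closure (Set.range h)
  have hKL : K ≤ L := AddSubgroup.closure_mono (Set.range_comp_subset_range _ h)
  have hLK : L ≤ K ⊔ AddSubgroup.zmultiples (h (Fin.last n)) := by
    refine (AddSubgroup.closure_le _).mpr ?_
    rintro _ ⟨j, rfl⟩
    induction j using Fin.lastCases with
    | last => exact AddSubgroup.mem_sup_right (AddSubgroup.mem_zmultiples _)
    | cast i => exact AddSubgroup.mem_sup_left (AddSubgroup.subset_closure ⟨i, rfl⟩)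
  obtain ⟨θ', hθ'⟩ := hpure L ⟨Finset.univ.image h, by simp [L]⟩
  have hlast : h (Fin.last n) ∈ L := AddSubgroup.subset_closure ⟨_, rfl⟩
  obtain ⟨k, hk⟩ := K.exists_nat_zsmul_mem_iff_dvd (h (Fin.last n))
  have hθ'k : ∀ w : K, (w : H) = (k : ℤ) • h (Fin.last n) →
      θ' (AddSubgroup.inclusion hKL w) = (k : ℤ) • θ' ⟨_, hlast⟩ := fun w hw => by
    rw [← map_zsmul]
    exact congrArg θ' (Subtype.ext hw)
  let s : Finset K :=
    Finset.univ.image fun i : Fin n => ⟨h i.castSucc, AddSubgroup.subset_closure ⟨i, rfl⟩⟩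
  obtain ⟨θt, e, hθt, he, hθte, hsmall⟩ := hdiv.exists_corrected_section π hker
    ((hk k).mpr dvd_rfl) (θ'.comp (AddSubgroup.inclusion hKL)) θn (fun w => hθ' _) hθn
    (θ' ⟨_, hlast⟩) (hθ' _) hθ'k s hε
  obtain ⟨θ'', hθ''π, hθ''⟩ := exists_section_sup_zmultiples_extending π hk θt hθt e he hθte
  refine ⟨θ''.comp (AddSubgroup.inclusion hLK), fun x => hθ''π _, fun i => ?_⟩
  obtain ⟨g, hg, hgε⟩ := hsmall _ (Finset.mem_image_of_mem _ (Finset.mem_univ i))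
  exact ⟨g, by rw [← hg, ← hθ'']; rfl, hgε⟩

/-- Lemma `smalltrace`: given a pure extension `0 → G → E → H → 0` with
`G` a tracially approximately divisible partially ordered abelian group with order unit,
any partial splitting map `θ_n` on the subgroup generated by `h₁, …, h_n` extends, after
correction, to a partial splitting map `θ_{n+1}` on the subgroup generated by
`h₁, …, h_{n+1}` such that `θ_{n+1}(h i) - θ_n(h i)` lies in `G` and has state values of
absolute value `< ε` for all `1 ≤ i ≤ n`. -/
theorem stmt_2 {E H : Type*} [AddCommGroup E] [AddCommGroup H]
    (G : AddSubgroup E) [PartialOrder ↥G] [CovariantClass ↥G ↥G (· + ·) (· ≤ ·)]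
    (u : ↥G) (hu : 0 ≤ u ∧ ∀ g : ↥G, ∃ n : ℕ, -(n • u) ≤ g ∧ g ≤ n • u)
    (hdiv : TraciallyApproxDivisible u)
    (π : E →+ H) (hsurj : Function.Surjective π) (hker : π.ker = G)
    (hpure : ∀ H' : AddSubgroup H, H'.FG →
      ∃ θ' : ↥H' →+ E, ∀ x : ↥H', π (θ' x) = (x : H))
    (n : ℕ) (h : Fin (n + 1) → H)
    (θn : ↥(AddSubgroup.closure (Set.range fun i : Fin n => h i.castSucc)) →+ E)
    (hθn : ∀ x, π (θn x) = (x : H))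
    (ε : ℝ) (hε : 0 < ε) :
    ∃ θn1 : ↥(AddSubgroup.closure (Set.range h)) →+ E,
      (∀ x, π (θn1 x) = (x : H)) ∧
      ∀ i : Fin n, ∃ g : ↥G,
        θn1 ⟨h i.castSucc, AddSubgroup.subset_closure ⟨i.castSucc, rfl⟩⟩ -
            θn ⟨h i.castSucc, AddSubgroup.subset_closure ⟨i, rfl⟩⟩ = (g : E) ∧
        ∀ τ : ↥G →+ ℝ, IsPOGroupState u τ → |τ g| < ε :=
  stmt_2_general G u hdiv π hker hpure n h θn hθn ε hε
end

section
/- Let A be a unital C*-algebra and let B ⊆ A be a unital C*-subalgebra (containing the unit of A). Let (F_n)_{n≥1} be an increasing sequence of finite subsets of B whose union is dense in B. Let (u_n)_{n≥1} be unitaries in A with u_1 = 1, set w_n = u_1 u_2 ⋯ u_n, and suppose that for every n ≥ 1 and every a ∈ F_n one has ‖u_{n+1}(w_n^* a w_n) − (w_n^* a w_n)u_{n+1}‖ ≤ 1/2^{n+1}. Then for every b ∈ B the limit α(b) := lim_{n→∞} w_n^* b w_n exists in A, and the map α : B → A so defined is a unital, isometric (hence injective) *-homomorphism. -/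
open Filter


/-- first assertion of Lemma `decomp`: Let `A` be a unital C*-algebra and
`B ⊆ A` a unital (closed) C*-subalgebra.  Let `(F n)` be an increasing sequence of finite
subsets of `B` whose union is dense in `B`, and let `(u n)` be unitaries with `u 0 = 1`
(here `u n` is the `u_{n+1}` of the paper) such that, writing `w n = u 0 * u 1 * ⋯ * u n`,
`‖u (n+1) * (w n)^* a (w n) - (w n)^* a (w n) * u (n+1)‖ ≤ 1/2^(n+2)` for all `a ∈ F n`.
Then `Ad (w n)` converges pointwise on `B`, and the limit `α : B → A` is a unital
isometric (hence injective) *-homomorphism. -/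
theorem stmt_3 {A : Type*} [NormedRing A] [StarRing A] [CStarRing A]
    [NormedAlgebra ℂ A] [StarModule ℂ A] [CompleteSpace A]
    (B : StarSubalgebra ℂ A) (hBclosed : IsClosed (B : Set A))
    (F : ℕ → Finset A) (hFB : ∀ n, (F n : Set A) ⊆ (B : Set A))
    (hFmono : ∀ n, (F n : Set A) ⊆ (F (n + 1) : Set A))
    (hFdense : closure (⋃ n, (F n : Set A)) = (B : Set A))
    (u : ℕ → A) (huu : ∀ n, u n ∈ unitary A) (hu0 : u 0 = 1)
    (w : ℕ → A) (hw : ∀ n, w n = ((List.range (n + 1)).map u).prod)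
    (hcomm : ∀ n, ∀ a ∈ F n,
      ‖u (n + 1) * (star (w n) * a * w n) - (star (w n) * a * w n) * u (n + 1)‖ ≤
        1 / 2 ^ (n + 2)) :
    ∃ α : B →⋆ₐ[ℂ] A, Isometry α ∧
      ∀ b : B, Filter.Tendsto (fun n => star (w n) * (b : A) * w n)
        Filter.atTop (nhds (α b)) := by
  -- w n is unitary
  have hwu : ∀ n, w n ∈ unitary A := by
    intro n
    rw [hw]
    refine Submonoid.list_prod_mem _ ?_
    intro x hx
    obtain ⟨k, -, rfl⟩ := List.mem_map.mp hx
    exact huu k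
  have hws : ∀ n, star (w n) * w n = 1 := fun n => (Unitary.mem_iff.mp (hwu n)).1
  have hws' : ∀ n, w n * star (w n) = 1 := fun n => (Unitary.mem_iff.mp (hwu n)).2
  -- conjugation is isometric
  have hnorm : ∀ v : A, v ∈ unitary A → ∀ x : A, ‖star v * x * v‖ = ‖x‖ := by
    intro v hv x
    rw [CStarRing.norm_mul_mem_unitary _ hv,
      CStarRing.norm_mem_unitary_mul _ (Unitary.star_mem hv)]
  -- recursion for w
  have hwsucc : ∀ n, w (n + 1) = w n * u (n + 1) := by
    intro n
    rw [hw, hw, List.range_succ, List.map_append, List.prod_append]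
    simp
  -- successive difference estimate
  have hdiff : ∀ m, ∀ a ∈ F m,
      ‖star (w (m + 1)) * a * w (m + 1) - star (w m) * a * w m‖ ≤ 1 / 2 ^ (m + 2) := by
    intro m a ha
    set x := star (w m) * a * w m with hx
    have e1 : star (w (m + 1)) * a * w (m + 1) = star (u (m + 1)) * x * u (m + 1) := by
      rw [hwsucc, star_mul, hx]; noncomm_ring
    have huv : star (u (m + 1)) * u (m + 1) = 1 := (Unitary.mem_iff.mp (huu (m + 1))).1
    have e2 : star (u (m + 1)) * x * u (m + 1) - x
        = star (u (m + 1)) * (x * u (m + 1) - u (m + 1) * x) := by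
      rw [mul_sub]
      rw [show star (u (m+1)) * (u (m+1) * x) = (star (u (m+1)) * u (m+1)) * x by noncomm_ring,
        huv, one_mul]
      noncomm_ring
    rw [e1, e2]
    rw [CStarRing.norm_mem_unitary_mul _ (Unitary.star_mem (huu (m + 1)))]
    have := hcomm m a ha
    rw [show x * u (m + 1) - u (m + 1) * x = -(u (m+1) * x - x * u (m+1)) from (neg_sub _ _).symm,
      norm_neg]
    exact this
  -- membership in F is monotone
  have hFmono' : ∀ n m, n ≤ m → ∀ a ∈ F n, a ∈ F m := by
    intro n m hnm
    induction m with
    | zero => intro a ha; obtain rfl := Nat.le_zero.mp hnm; exact ha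
    | succ k ih =>
        intro a ha
        rcases Nat.lt_or_ge n (k + 1) with h | h
        · exact hFmono k (ih (by omega) a ha)
        · have : n = k + 1 := by omega
          subst this; exact ha
  -- Cauchy on elements of F n
  have hCF : ∀ n, ∀ a ∈ F n, CauchySeq (fun m => star (w m) * a * w m) := by
    intro n a ha
    refine cauchySeq_of_le_geometric (1/2) (2 * ‖a‖ * 2 ^ n + 1) (by norm_num) ?_
    intro m
    rw [dist_eq_norm]
    rcases Nat.lt_or_ge m n with h | h
    · have hb1 : ‖star (w m) * a * w m - star (w (m+1)) * a * w (m+1)‖ ≤ 2 * ‖a‖ := by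
        calc ‖star (w m) * a * w m - star (w (m+1)) * a * w (m+1)‖
            ≤ ‖star (w m) * a * w m‖ + ‖star (w (m+1)) * a * w (m+1)‖ := norm_sub_le _ _
          _ = 2 * ‖a‖ := by rw [hnorm _ (hwu m), hnorm _ (hwu (m+1))]; ring
      refine hb1.trans ?_
      have h2 : (2:ℝ) * ‖a‖ * 2 ^ m ≤ 2 * ‖a‖ * 2 ^ n := by
        have : (2:ℝ) ^ m ≤ 2 ^ n := by
          apply pow_le_pow_right₀ (by norm_num) (by omega)
        nlinarith [norm_nonneg a]
      have h2m : (0:ℝ) < (2:ℝ)^m := by positivity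
      rw [div_pow, one_pow, mul_one_div, le_div_iff₀ h2m]
      linarith
    · have ham : a ∈ F m := hFmono' n m h a ha
      have := hdiff m a ham
      rw [norm_sub_rev] at this
      refine this.trans ?_
      have e : ((1:ℝ)/2) ^ m = 1 / 2 ^ m := by rw [div_pow, one_pow]
      rw [e]
      have h1 : (1:ℝ) / 2 ^ (m + 2) ≤ 1 / 2 ^ m := by
        apply div_le_div_of_nonneg_left one_pos.le (by positivity)
        apply pow_le_pow_right₀ (by norm_num) (by omega)
      refine h1.trans ?_
      have h2 : (0:ℝ) < 1 / 2 ^ m := by positivity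
      have h3 : (1:ℝ) ≤ 2 * ‖a‖ * 2 ^ n + 1 := le_add_of_nonneg_left (by positivity)
      calc (1:ℝ) / 2 ^ m = 1 * (1 / 2 ^ m) := (one_mul _).symm
        _ ≤ (2 * ‖a‖ * 2 ^ n + 1) * (1 / 2 ^ m) := mul_le_mul_of_nonneg_right h3 h2.le
  -- conjugation is isometric on differences
  have hdist : ∀ m (x y : A),
      dist (star (w m) * x * w m) (star (w m) * y * w m) = dist x y := by
    intro m x y
    rw [dist_eq_norm, dist_eq_norm,
      show star (w m) * x * w m - star (w m) * y * w m = star (w m) * (x - y) * w m by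
        noncomm_ring,
      hnorm _ (hwu m)]
  -- Cauchy on all of B
  have hCb : ∀ b : B, CauchySeq (fun m => star (w m) * (b : A) * w m) := by
    intro b
    rw [Metric.cauchySeq_iff']
    intro ε hε
    have hbmem : (b : A) ∈ closure (⋃ n, (F n : Set A)) := by rw [hFdense]; exact b.2
    obtain ⟨a, ha, hab⟩ := Metric.mem_closure_iff.mp hbmem (ε/3) (by positivity)
    obtain ⟨n, han⟩ := Set.mem_iUnion.mp ha
    obtain ⟨N, hN⟩ := Metric.cauchySeq_iff'.mp (hCF n a han) (ε/3) (by positivity)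
    refine ⟨N, fun m hm => ?_⟩
    calc dist (star (w m) * (b:A) * w m) (star (w N) * (b:A) * w N)
        ≤ dist (star (w m) * (b:A) * w m) (star (w m) * a * w m)
          + dist (star (w m) * a * w m) (star (w N) * a * w N)
          + dist (star (w N) * a * w N) (star (w N) * (b:A) * w N) := dist_triangle4 _ _ _ _
      _ < ε/3 + ε/3 + ε/3 := by
          have h1 := hdist m (b:A) a
          have h2 := hdist N a (b:A)
          have h3 := hN m hm
          rw [h1, h2]
          rw [dist_comm (a:A) (b:A)]
          have := hab
          gcongr
      _ = ε := by ring
  -- limits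
  have hlim : ∀ b : B, Tendsto (fun m => star (w m) * (b : A) * w m)
      atTop (nhds (limUnder atTop (fun m => star (w m) * (b : A) * w m))) :=
    fun b => (hCb b).tendsto_limUnder
  set L : B → A := fun b => limUnder atTop (fun m => star (w m) * (b : A) * w m) with hL
  -- multiplicativity of conjugation
  have hmul : ∀ m (x y : A), star (w m) * (x * y) * w m
      = (star (w m) * x * w m) * (star (w m) * y * w m) := by
    intro m x y
    have : (star (w m) * x * w m) * (star (w m) * y * w m)
        = star (w m) * x * (w m * star (w m)) * y * w m := by noncomm_ring
    rw [this, hws', mul_one]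
    noncomm_ring
  refine ⟨{ toFun := L
            map_one' := ?_
            map_mul' := ?_
            map_zero' := ?_
            map_add' := ?_
            commutes' := ?_
            map_star' := ?_ }, ?_, ?_⟩
  · refine tendsto_nhds_unique (hlim 1) ?_
    have : (fun m => star (w m) * ((1 : B) : A) * w m) = fun m => (1 : A) := by
      funext m; rw [OneMemClass.coe_one, mul_one, hws]
    rw [this]
    exact tendsto_const_nhds
  · intro b c
    refine tendsto_nhds_unique (hlim (b * c)) ?_
    have : (fun m => star (w m) * ((b * c : B) : A) * w m)
        = fun m => (star (w m) * (b:A) * w m) * (star (w m) * (c:A) * w m) := by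
      funext m; rw [MulMemClass.coe_mul, hmul]
    rw [this]
    exact (hlim b).mul (hlim c)
  · refine tendsto_nhds_unique (hlim 0) ?_
    have : (fun m => star (w m) * ((0 : B) : A) * w m) = fun m => (0 : A) := by
      funext m; simp
    rw [this]
    exact tendsto_const_nhds
  · intro b c
    refine tendsto_nhds_unique (hlim (b + c)) ?_
    have : (fun m => star (w m) * ((b + c : B) : A) * w m)
        = fun m => (star (w m) * (b:A) * w m) + (star (w m) * (c:A) * w m) := by
      funext m; rw [AddMemClass.coe_add]; noncomm_ring
    rw [this]
    exact (hlim b).add (hlim c)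
  · intro r
    refine tendsto_nhds_unique (hlim (algebraMap ℂ B r)) ?_
    have : (fun m => star (w m) * ((algebraMap ℂ B r : B) : A) * w m)
        = fun m => algebraMap ℂ A r := by
      funext m
      have : ((algebraMap ℂ B r : B) : A) = algebraMap ℂ A r := rfl
      rw [this, ← Algebra.commutes r (star (w m)), mul_assoc, hws, mul_one]
    rw [this]
    exact tendsto_const_nhds
  · intro b
    refine tendsto_nhds_unique (hlim (star b)) ?_
    have : (fun m => star (w m) * ((star b : B) : A) * w m)
        = fun m => star (star (w m) * (b:A) * w m) := by
      funext m
      rw [star_mul, star_mul, star_star]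
      have : ((star b : B) : A) = star (b : A) := rfl
      rw [this]
      noncomm_ring
    rw [this]
    exact (hlim b).star
  · apply AddMonoidHomClass.isometry_of_norm
    intro b
    have h1 : Tendsto (fun m => ‖star (w m) * (b:A) * w m‖) atTop (nhds ‖L b‖) :=
      (hlim b).norm
    have h2 : (fun m => ‖star (w m) * (b:A) * w m‖) = fun _ => ‖(b:A)‖ := by
      funext m; exact hnorm _ (hwu m) _
    rw [h2] at h1
    exact (tendsto_nhds_unique h1 tendsto_const_nhds).symm ▸ rfl
  · intro b
    exact hlim b
end

section
/- Let A be a unital C*-algebra, let p and q be mutually orthogonal projections in A (p = p^* = p^2, q = q^* = q^2, pq = 0), and let τ : A → ℂ be a continuous linear functional satisfying the trace property τ(ab) = τ(ba) for all a, b ∈ A. Define u : [0,1] → A by u(t) = (e^{2πit}p + (1 − p))(e^{−2πit}q + (1 − q)). Then u(t) is a unitary for every t ∈ [0,1], u(0) = u(1) = 1, the map t ↦ u(t) is differentiable with u'(t)u(t)^* = 2πi(p − q) for all t, and consequently (1/(2πi)) ∫_0^1 τ(u'(t) u(t)^*) dt = τ(p) − τ(q). -/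
open scoped Real

lemma stmt4_prod_eq {A : Type*} [NormedRing A] [NormedAlgebra ℂ A]
    (p q : A) (hp2 : p*p=p) (hq2 : q*q=q) (hpq : p*q=0) (hqp : q*p=0)
    (a b c d : ℂ) :
    (a•p + b•q + (1-p-q)) * (c•p + d•q + (1-p-q)) = (a*c)•p + (b*d)•q + (1-p-q) := by
  simp only [mul_add, add_mul, smul_mul_assoc, mul_smul_comm, smul_smul,
    mul_sub, sub_mul, hp2, hq2, hpq, hqp, one_mul, mul_one, smul_zero,
    sub_zero, zero_sub, smul_sub, sub_self, smul_neg, zero_add]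
  module

/-- the computation of §2.5 `loop`: for mutually orthogonal projections
`p, q` in a unital C*-algebra `A`, and a continuous tracial functional `τ`, the loop
`u t = (e^{2πit} p + (1-p)) (e^{-2πit} q + (1-q))` consists of unitaries, starts and ends
at `1`, is differentiable with `u' t * (u t)^* = 2πi (p - q)`, and
`(1/(2πi)) ∫_0^1 τ (u' t * (u t)^*) dt = τ p - τ q`. -/
theorem stmt_4 {A : Type*} [NormedRing A] [StarRing A] [CStarRing A]
    [NormedAlgebra ℂ A] [StarModule ℂ A] [CompleteSpace A]
    (p q : A) (hp : star p = p ∧ p * p = p) (hq : star q = q ∧ q * q = q)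
    (hpq : p * q = 0)
    (τ : A →L[ℂ] ℂ) (htr : ∀ a b : A, τ (a * b) = τ (b * a))
    (u : ℝ → A)
    (hu : ∀ t : ℝ, u t =
      (Complex.exp (2 * (Real.pi : ℂ) * Complex.I * (t : ℂ)) • p + (1 - p)) *
      (Complex.exp (-(2 * (Real.pi : ℂ) * Complex.I * (t : ℂ))) • q + (1 - q))) :
    (∀ t ∈ Set.Icc (0 : ℝ) 1, u t ∈ unitary A) ∧
    u 0 = 1 ∧ u 1 = 1 ∧
    ∃ u' : ℝ → A,
      (∀ t ∈ Set.Icc (0 : ℝ) 1, HasDerivAt u (u' t) t) ∧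
      (∀ t ∈ Set.Icc (0 : ℝ) 1,
        u' t * star (u t) = (2 * (Real.pi : ℂ) * Complex.I) • (p - q)) ∧
      (1 / (2 * (Real.pi : ℂ) * Complex.I)) *
          (∫ t in (0 : ℝ)..1, τ (u' t * star (u t))) = τ p - τ q := by
  obtain ⟨hps, hp2⟩ := hp
  obtain ⟨hqs, hq2⟩ := hq
  have hqp : q * p = 0 := by
    have := congrArg star hpq
    simpa [star_mul, hps, hqs] using this
  set c : ℂ := 2 * (Real.pi : ℂ) * Complex.I with hc
  -- the simplified form of u
  have key : ∀ t : ℝ, u t = Complex.exp (c * t) • p + Complex.exp (-(c * t)) • q + (1 - p - q) := by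
    intro t
    rw [hu t]
    simp only [mul_add, add_mul, smul_mul_assoc, mul_smul_comm, smul_smul,
      mul_sub, sub_mul, hp2, hq2, hpq, hqp, one_mul, mul_one, smul_zero,
      sub_zero, zero_sub, smul_sub, sub_self, smul_neg, zero_add]
    module
  have hexp : ∀ t : ℝ, Complex.exp (c * t) * Complex.exp (-(c * t)) = 1 := by
    intro t
    rw [← Complex.exp_add, add_neg_cancel, Complex.exp_zero]
  have hexp' : ∀ t : ℝ, Complex.exp (-(c * t)) * Complex.exp (c * t) = 1 := by
    intro t
    rw [← Complex.exp_add, neg_add_cancel, Complex.exp_zero]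
  have hstar : ∀ t : ℝ, star (u t) =
      Complex.exp (-(c * t)) • p + Complex.exp (c * t) • q + (1 - p - q) := by
    intro t
    rw [key t]
    have h1 : (starRingEnd ℂ) (Complex.exp (c * t)) = Complex.exp (-(c * t)) := by
      rw [← Complex.exp_conj]
      congr 1
      simp only [hc, map_neg, map_mul, Complex.conj_I, Complex.conj_ofReal, map_ofNat]
      ring
    have h2 : (starRingEnd ℂ) (Complex.exp (-(c * t))) = Complex.exp (c * t) := by
      rw [← Complex.exp_conj]
      congr 1
      simp only [hc, map_neg, map_mul, Complex.conj_I, Complex.conj_ofReal, map_ofNat]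
      ring
    simp [star_smul, star_sub, hps, hqs, h1, h2]
  have hone : (1 : ℂ) • p + (1 : ℂ) • q + (1 - p - q) = 1 := by
    simp only [one_smul]; abel
  refine ⟨?_, ?_, ?_, ?_⟩
  · -- unitary
    intro t _
    constructor
    · rw [hstar t, key t, stmt4_prod_eq p q hp2 hq2 hpq hqp, hexp' t, hexp t, hone]
    · rw [hstar t, key t, stmt4_prod_eq p q hp2 hq2 hpq hqp, hexp t, hexp' t, hone]
  · rw [key 0]
    simp only [Complex.ofReal_zero, mul_zero, neg_zero, Complex.exp_zero]
    rw [hone]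
  · rw [key 1]
    have h1 : Complex.exp (c * (1:ℝ)) = 1 := by
      simp only [Complex.ofReal_one, mul_one, hc]
      exact Complex.exp_two_pi_mul_I
    have h2 : Complex.exp (-(c * (1:ℝ))) = 1 := by
      rw [Complex.exp_neg, h1, inv_one]
    rw [h1, h2, hone]
  · refine ⟨fun t => (c * Complex.exp (c * t)) • p + (-c * Complex.exp (-(c * t))) • q, ?_, ?_, ?_⟩
    · intro t _
      have hid : HasDerivAt (fun s : ℝ => (s : ℂ)) 1 t := by
        simpa using (hasDerivAt_id t).ofReal_comp
      have h1 : HasDerivAt (fun s : ℝ => Complex.exp (c * s)) (c * Complex.exp (c * t)) t := by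
        have := ((hid.const_mul c).cexp)
        simpa [mul_comm] using this
      have h2 : HasDerivAt (fun s : ℝ => Complex.exp (-(c * s)))
          (-c * Complex.exp (-(c * t))) t := by
        have := ((hid.const_mul (-c)).cexp)
        simpa [neg_mul, mul_comm] using this
      have : HasDerivAt
          (fun s : ℝ => Complex.exp (c * s) • p + Complex.exp (-(c * s)) • q + (1 - p - q))
          ((c * Complex.exp (c * t)) • p + (-c * Complex.exp (-(c * t))) • q) t := by
        simpa using ((h1.smul_const p).add (h2.smul_const q)).add_const (1 - p - q)
      exact this.congr_of_eventuallyEq (Filter.Eventually.of_forall fun s => key s)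
    · intro t _
      rw [hstar t]
      have expand : ((c * Complex.exp (c * t)) • p + (-c * Complex.exp (-(c * t))) • q) *
          (Complex.exp (-(c * t)) • p + Complex.exp (c * t) • q + (1 - p - q)) =
          (c * Complex.exp (c * t) * Complex.exp (-(c * t))) • p +
          (-c * Complex.exp (-(c * t)) * Complex.exp (c * t)) • q := by
        simp only [mul_add, add_mul, smul_mul_assoc, mul_smul_comm, smul_smul,
          mul_sub, sub_mul, hp2, hq2, hpq, hqp, one_mul, mul_one, smul_zero,
          sub_zero, zero_sub, smul_sub, sub_self, smul_neg, zero_add, add_zero]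
        module
      rw [expand, mul_assoc c, hexp t, mul_assoc (-c), hexp' t, mul_one, mul_one,
        neg_smul, smul_sub]
      abel
    · have hconst : ∀ t ∈ Set.Icc (0:ℝ) 1, True := fun _ _ => trivial
      have hval : ∀ t : ℝ,
          ((c * Complex.exp (c * t)) • p + (-c * Complex.exp (-(c * t))) • q) * star (u t) =
          c • (p - q) := by
        intro t
        rw [hstar t]
        have expand : ((c * Complex.exp (c * t)) • p + (-c * Complex.exp (-(c * t))) • q) *
            (Complex.exp (-(c * t)) • p + Complex.exp (c * t) • q + (1 - p - q)) =
            (c * Complex.exp (c * t) * Complex.exp (-(c * t))) • p +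
            (-c * Complex.exp (-(c * t)) * Complex.exp (c * t)) • q := by
          simp only [mul_add, add_mul, smul_mul_assoc, mul_smul_comm, smul_smul,
            mul_sub, sub_mul, hp2, hq2, hpq, hqp, one_mul, mul_one, smul_zero,
            sub_zero, zero_sub, smul_sub, sub_self, smul_neg, zero_add, add_zero]
          module
        rw [expand, mul_assoc c, hexp t, mul_assoc (-c), hexp' t, mul_one, mul_one,
          neg_smul, smul_sub]
        abel
      have hint : (∫ t in (0:ℝ)..1,
          τ (((c * Complex.exp (c * t)) • p + (-c * Complex.exp (-(c * t))) • q) * star (u t)))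
          = c * (τ p - τ q) := by
        have : ∀ t : ℝ,
            τ (((c * Complex.exp (c * t)) • p + (-c * Complex.exp (-(c * t))) • q) * star (u t))
            = c * (τ p - τ q) := by
          intro t
          rw [hval t, map_smul, map_sub, smul_eq_mul]
        simp only [this, intervalIntegral.integral_const, sub_zero, one_smul, smul_eq_mul]
      rw [hint]
      have hc0 : c ≠ 0 := by
        simp only [hc]
        simp [Real.pi_ne_zero, Complex.I_ne_zero, Complex.ofReal_ne_zero]
      field_simp
end

section
/- Let G be a partially ordered abelian group with order unit u which is tracially approximately divisible. Then for every a ∈ G and every δ > 0 there exist an integer n ≥ 1 and elements a_1, …, a_n ∈ G with a = a_1 + a_2 + ⋯ + a_n such that |τ(a_i)| < δ for every 1 ≤ i ≤ n and every state τ of (G, u). -/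
/-- in a tracially approximately divisible partially ordered abelian group
with order unit, every element decomposes as a finite sum of elements all of whose state
values are of absolute value `< δ`. -/
theorem stmt_6 {G : Type*} [AddCommGroup G] [PartialOrder G]
    [CovariantClass G G (· + ·) (· ≤ ·)] (u : G)
    (hu : 0 ≤ u ∧ ∀ g : G, ∃ n : ℕ, -(n • u) ≤ g ∧ g ≤ n • u)
    (hdiv : TraciallyApproxDivisible u)
    (a : G) (δ : ℝ) (hδ : 0 < δ) :
    ∃ n : ℕ, 1 ≤ n ∧ ∃ f : Fin n → G, a = ∑ i, f i ∧
      ∀ i : Fin n, ∀ τ : G →+ ℝ, IsPOGroupState u τ → |τ (f i)| < δ := by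
  obtain ⟨m, hm1, hm2⟩ := hu.2 a
  -- uniform bound |τ a| ≤ m
  have hbound : ∀ τ : G →+ ℝ, IsPOGroupState u τ → |τ a| ≤ (m : ℝ) := by
    intro τ ⟨hpos, hnorm⟩
    have hmu : τ (m • u) = (m : ℝ) := by
      rw [map_nsmul, hnorm, nsmul_eq_mul, mul_one]
    have h1 : τ a ≤ (m : ℝ) := by
      have := hpos _ (sub_nonneg.mpr hm2)
      rw [map_sub] at this; linarith [hmu]
    have h2 : -(m : ℝ) ≤ τ a := by
      have := hpos _ (sub_nonneg.mpr (neg_le.mp hm1))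
      rw [map_sub, map_neg] at this; linarith [hmu]
    exact abs_le.mpr ⟨h2, h1⟩
  -- choose N with m + δ/2 < (N+1) * (δ/2)
  obtain ⟨N, hN⟩ := exists_nat_gt (((m : ℝ) + δ / 2) / (δ / 2))
  have hδ2 : (0 : ℝ) < δ / 2 := by linarith
  have hNbig : (m : ℝ) + δ / 2 < (N + 1 : ℝ) * (δ / 2) := by
    have := (div_lt_iff₀ hδ2).mp hN
    nlinarith
  obtain ⟨b, hb⟩ := hdiv a (δ / 2) hδ2 (N + 1) (Nat.le_add_left 1 N)
  -- key estimate on |τ b|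
  have hτb : ∀ τ : G →+ ℝ, IsPOGroupState u τ → |τ b| < δ / 2 := by
    intro τ hτ
    have h1 := hb τ hτ
    have h2 := hbound τ hτ
    have heq : τ (a - (N + 1) • b) = τ a - (N + 1 : ℝ) * τ b := by
      rw [map_sub, map_nsmul, nsmul_eq_mul]; push_cast; ring_nf
    rw [heq] at h1
    have hpos : (0 : ℝ) < (N + 1 : ℝ) := by positivity
    rw [abs_lt]; rw [abs_le] at h1 h2
    constructor
    · nlinarith [abs_nonneg (τ b), le_abs_self (τ b), neg_abs_le (τ b)]
    · nlinarith [abs_nonneg (τ b), le_abs_self (τ b), neg_abs_le (τ b)]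
  refine ⟨N + 1, Nat.le_add_left 1 N, Fin.cons (a - N • b) (fun _ => b), ?_, ?_⟩
  · rw [Fin.sum_cons]
    simp [Finset.sum_const, sub_add_cancel]
  · intro i τ hτ
    refine Fin.cases ?_ ?_ i
    · have h1 := hb τ hτ
      have h2 := hτb τ hτ
      have heq : τ (a - N • b) = τ (a - (N + 1) • b) + τ b := by
        rw [map_sub, map_sub, map_nsmul, map_nsmul]; push_cast; ring
      simp only [Fin.cons_zero]
      calc |τ (a - N • b)| = |τ (a - (N + 1) • b) + τ b| := by rw [heq]
        _ ≤ |τ (a - (N + 1) • b)| + |τ b| := abs_add_le _ _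
        _ < δ / 2 + δ / 2 := by linarith
        _ = δ := by ring
    · intro j
      simp only [Fin.cons_succ]
      linarith [hτb τ hτ]
end
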